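/- The infinite series ∑_{k=0}^∞ (3k+2) · ((1)_k)^3 / (((3/2)_k)^3 · 4^k) equals π²/4. -/

import Mathlib

/-!
Put `B(m,k) = (1)_k³ / ((3/2)_k (m+3/2)_k² 4^k (2m+1)²)`, `F(m,k) = (3k+2m+2) B(m,k)` and
`G(m,k) = (4k+2) B(m,k)`. These form a Wilf–Zeilberger pair:
`F(m,k) - F(m+1,k) = G(m,k) - G(m,k+1)`. Summing over `k` telescopes to
`∑ₖ F(m,k) - ∑ₖ F(m+1,k) = G(m,0) = 2/(2m+1)²`, and since `∑ₖ F(m,k) → 0` as `m → ∞`, summing over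
`m` gives `∑ₖ F(0,k) = ∑ₘ 2/(2m+1)² = π²/4`. The series of the theorem is `∑ₖ F(0,k)`.
-/

open Real

noncomputable def poch (x : ℝ) (k : ℕ) : ℝ := ∏ i ∈ Finset.range k, (x + i)

noncomputable def H2 (n : ℕ) : ℝ := ∑ i ∈ Finset.range n, 1 / ((i : ℝ) + 1) ^ 2

open Filter Topology Finset

theorem tendsto_sum_range_sub_succ {α : Type*} [AddCommGroup α] [TopologicalSpace α]
    [IsTopologicalAddGroup α] {f : ℕ → α} {l : α} (hf : Tendsto f atTop (𝓝 l)) :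
    Tendsto (fun n ↦ ∑ i ∈ range n, (f i - f (i + 1))) atTop (𝓝 (f 0 - l)) := by
  simpa only [sum_range_sub'] using tendsto_const_nhds.sub hf

/-- Only the partial sums in `m` are controlled: the telescoped series need not be summable. -/
theorem tendsto_sum_range_of_wz {α : Type*} [AddCommGroup α] [TopologicalSpace α]
    [IsTopologicalAddGroup α] [T2Space α] {F G : ℕ → ℕ → α}
    (hwz : ∀ m k, F m k - F (m + 1) k = G m k - G m (k + 1)) (hF : ∀ m, Summable (F m))
    (hG : ∀ m, Tendsto (G m) atTop (𝓝 0)) (hA : Tendsto (fun m ↦ ∑' k, F m k) atTop (𝓝 0)) :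
    Tendsto (fun M ↦ ∑ m ∈ range M, G m 0) atTop (𝓝 (∑' k, F 0 k)) := by
  have hrow (m : ℕ) : G m 0 = ∑' k, F m k - ∑' k, F (m + 1) k := by
    refine tendsto_nhds_unique ?_ ((hF m).hasSum.sub (hF (m + 1)).hasSum).tendsto_sum_nat
    simpa only [hwz, sub_zero] using tendsto_sum_range_sub_succ (hG m)
  simpa only [hrow, sub_zero] using tendsto_sum_range_sub_succ hA

theorem hasSum_one_div_odd_sq :
    HasSum (fun n : ℕ ↦ 1 / (2 * (n : ℝ) + 1) ^ 2) (π ^ 2 / 8) := by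
  have hodd : Summable (fun n : ℕ ↦ 1 / ((2 * n + 1 : ℕ) : ℝ) ^ 2) :=
    hasSum_zeta_two.summable.comp_injective fun a b h ↦ by simpa using h
  have heven : HasSum (fun n : ℕ ↦ 1 / ((2 * n : ℕ) : ℝ) ^ 2) (π ^ 2 / 24) := by
    have h := hasSum_zeta_two.mul_left (1 / 4)
    rw [show 1 / 4 * (π ^ 2 / 6) = π ^ 2 / 24 by ring] at h
    refine h.congr_fun fun n ↦ ?_
    push_cast; ring
  obtain ⟨b, hb⟩ := hodd
  have hb8 : b = π ^ 2 / 8 := by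
    linarith [hasSum_zeta_two.unique
      (HasSum.even_add_odd (f := fun n : ℕ ↦ 1 / (n : ℝ) ^ 2) heven hb)]
  subst hb8
  exact hb.congr_fun fun n ↦ by push_cast; rfl

theorem poch_succ (x : ℝ) (k : ℕ) : poch x (k + 1) = poch x k * (x + k) :=
  prod_range_succ _ _

theorem poch_pos {x : ℝ} (hx : 0 < x) (k : ℕ) : 0 < poch x k :=
  prod_pos fun i _ ↦ by positivity

theorem mul_poch_add_one (x : ℝ) (k : ℕ) : x * poch (x + 1) k = poch x k * (x + k) := by
  induction k with
  | zero => simp [poch]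
  | succ k ih =>
    rw [poch_succ, poch_succ, ← mul_assoc, ih]
    push_cast; ring

theorem poch_le_poch {x y : ℝ} (hx : 0 ≤ x) (hxy : x ≤ y) (k : ℕ) : poch x k ≤ poch y k :=
  prod_le_prod (fun i _ ↦ by positivity) fun i _ ↦ by linarith

noncomputable def wzB (m k : ℕ) : ℝ :=
  poch 1 k ^ 3 / (poch (3 / 2) k * poch (m + 3 / 2) k ^ 2 * 4 ^ k * (2 * m + 1) ^ 2)

noncomputable def wzF (m k : ℕ) : ℝ := (3 * k + 2 * m + 2) * wzB m k

noncomputable def wzG (m k : ℕ) : ℝ := (4 * k + 2) * wzB m k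

theorem wzB_nonneg (m k : ℕ) : 0 ≤ wzB m k := by
  have h1 := poch_pos (by norm_num : (0 : ℝ) < 1) k
  have h32 := poch_pos (by norm_num : (0 : ℝ) < 3 / 2) k
  unfold wzB; positivity

theorem wzB_le (m k : ℕ) : wzB m k ≤ (1 / 4) ^ k / (2 * m + 1) ^ 2 := by
  have h1 := poch_pos (by norm_num : (0 : ℝ) < 1) k
  have h32 := poch_pos (by norm_num : (0 : ℝ) < 3 / 2) k
  have hm := poch_pos (by positivity : (0 : ℝ) < m + 3 / 2) k
  have hle : poch 1 k ^ 3 ≤ poch (3 / 2) k * poch (m + 3 / 2) k ^ 2 := by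
    rw [pow_succ']
    gcongr
    · exact poch_le_poch zero_le_one (by norm_num) k
    · exact poch_le_poch zero_le_one (by linarith [m.cast_nonneg (α := ℝ)]) k
  unfold wzB
  calc _ ≤ poch (3 / 2) k * poch (m + 3 / 2) k ^ 2 /
        (poch (3 / 2) k * poch (m + 3 / 2) k ^ 2 * 4 ^ k * (2 * m + 1) ^ 2) := by gcongr
    _ = _ := by
      rw [mul_assoc, div_mul_cancel_left₀ (by positivity), one_div_pow, div_div, one_div]

theorem wzB_succ_right (m k : ℕ) : wzB m (k + 1) =
    wzB m k * (2 * (k + 1) ^ 3 / ((2 * k + 3) * (2 * k + 2 * m + 3) ^ 2)) := by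
  have h32 := poch_pos (by norm_num : (0 : ℝ) < 3 / 2) k
  have hm := poch_pos (by positivity : (0 : ℝ) < m + 3 / 2) k
  unfold wzB
  rw [poch_succ, poch_succ, poch_succ]
  field_simp
  ring

theorem wzB_succ_left (m k : ℕ) : wzB (m + 1) k =
    wzB m k * ((2 * m + 1) ^ 2 / (2 * k + 2 * m + 3) ^ 2) := by
  have h32 := poch_pos (by norm_num : (0 : ℝ) < 3 / 2) k
  have hm := poch_pos (by positivity : (0 : ℝ) < m + 3 / 2) k
  have hshift := mul_poch_add_one (m + 3 / 2) k
  unfold wzB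
  rw [show ((m + 1 : ℕ) : ℝ) + 3 / 2 = m + 3 / 2 + 1 by push_cast; ring,
    eq_div_of_mul_eq (by positivity) ((mul_comm _ _).trans hshift)]
  push_cast
  field_simp
  ring

theorem wzF_sub_wzF_succ (m k : ℕ) : wzF m k - wzF (m + 1) k = wzG m k - wzG m (k + 1) := by
  unfold wzF wzG
  rw [wzB_succ_left, wzB_succ_right]
  field_simp
  push_cast
  ring

theorem summable_four_mul_add_two_mul_quarter_pow :
    Summable (fun k : ℕ ↦ (4 * k + 2) * (1 / 4 : ℝ) ^ k) := by
  have hq : ‖(1 / 4 : ℝ)‖ < 1 := by norm_num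
  refine (((summable_pow_mul_geometric_of_norm_lt_one 1 hq).mul_left 4).add
    ((summable_geometric_of_norm_lt_one hq).mul_left 2)).congr fun k ↦ ?_
  ring

theorem wzG_le (m k : ℕ) : wzG m k ≤ (4 * k + 2) * (1 / 4) ^ k := by
  have hm : (1 : ℝ) ≤ (2 * m + 1) ^ 2 := one_le_pow₀ (by linarith [m.cast_nonneg (α := ℝ)])
  calc wzG m k ≤ (4 * k + 2) * ((1 / 4) ^ k / (2 * m + 1) ^ 2) := by
        unfold wzG; gcongr; exact wzB_le m k
    _ ≤ (4 * k + 2) * (1 / 4) ^ k := by gcongr; exact div_le_self (by positivity) hm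

theorem wzF_le (m k : ℕ) : wzF m k ≤ (4 * k + 2) * (1 / 4) ^ k / (m + 1) := by
  have hk := k.cast_nonneg (α := ℝ)
  have hm := m.cast_nonneg (α := ℝ)
  calc wzF m k ≤ (3 * k + 2 * m + 2) * ((1 / 4) ^ k / (2 * m + 1) ^ 2) := by
        unfold wzF; gcongr; exact wzB_le m k
    _ = (3 * k + 2 * m + 2) / (2 * m + 1) ^ 2 * (1 / 4) ^ k := by ring
    _ ≤ (4 * k + 2) / (m + 1) * (1 / 4) ^ k := by
        gcongr ?_ * _
        rw [div_le_div_iff₀ (by positivity) (by positivity)]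
        nlinarith [mul_nonneg hk hm, mul_nonneg (mul_nonneg hk hm) hm]
    _ = _ := by ring

theorem wzF_nonneg (m k : ℕ) : 0 ≤ wzF m k := mul_nonneg (by positivity) (wzB_nonneg m k)

theorem summable_wzF (m : ℕ) : Summable (wzF m) :=
  summable_four_mul_add_two_mul_quarter_pow.div_const _ |>.of_nonneg_of_le (wzF_nonneg m) (wzF_le m)

theorem tendsto_wzG (m : ℕ) : Tendsto (wzG m) atTop (𝓝 0) :=
  squeeze_zero (fun k ↦ mul_nonneg (by positivity) (wzB_nonneg m k)) (wzG_le m)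
    summable_four_mul_add_two_mul_quarter_pow.tendsto_atTop_zero

theorem tendsto_tsum_wzF : Tendsto (fun m ↦ ∑' k, wzF m k) atTop (𝓝 0) := by
  have hle (m : ℕ) :
      ∑' k, wzF m k ≤ (∑' k : ℕ, (4 * k + 2) * (1 / 4 : ℝ) ^ k) * (1 / (m + 1)) := by
    rw [← tsum_mul_right]
    refine (summable_wzF m).tsum_le_tsum (fun k ↦ ?_)
      (summable_four_mul_add_two_mul_quarter_pow.mul_right _)
    simpa only [mul_one_div] using wzF_le m k
  refine squeeze_zero (fun m ↦ tsum_nonneg (wzF_nonneg m)) hle ?_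
  simpa only [mul_zero] using (tendsto_one_div_add_atTop_nhds_zero_nat (𝕜 := ℝ)).const_mul _

theorem hasSum_wzG_zero : HasSum (fun m ↦ wzG m 0) (π ^ 2 / 4) := by
  rw [show π ^ 2 / 4 = 2 * (π ^ 2 / 8) by ring]
  refine (hasSum_one_div_odd_sq.mul_left 2).congr_fun fun m ↦ ?_
  simp [wzG, wzB, poch]

theorem stmt4 :
    ∑' k : ℕ, (3 * (k : ℝ) + 2) * (poch 1 k) ^ 3 / ((poch (3/2) k) ^ 3 * 4 ^ k)
      = π ^ 2 / 4 := by
  have hterm (k : ℕ) :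
      (3 * (k : ℝ) + 2) * (poch 1 k) ^ 3 / ((poch (3/2) k) ^ 3 * 4 ^ k) = wzF 0 k := by
    simp only [wzF, wzB, Nat.cast_zero, zero_add, mul_zero]
    ring
  rw [tsum_congr hterm]
  exact tendsto_nhds_unique
    (tendsto_sum_range_of_wz wzF_sub_wzF_succ summable_wzF tendsto_wzG tendsto_tsum_wzF)
    hasSum_wzG_zero.tendsto_sum_nat
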